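/- arXiv:2204.10745 — 2 statements merged into one kernel-verified Lean document; each statement's English description precedes it below -/
import Mathlib

section
/- Let φ : ℝ_{≥0} → ℝ_{≥0} be an N-function with right-derivative φ', and for a ≥ 0 define the shifted function φ_a by φ_a(t) := ∫₀^t φ'(a+s)·s/(a+s) ds. Then for each a ≥ 0, φ_a is again an N-function, i.e., φ_a is convex with φ_a(0) = 0, φ_a(t) > 0 for t > 0, φ_a(t)/t → 0 as t → 0, and φ_a(t)/t → ∞ as t → ∞. -/
/-!
Any `t ↦ ∫₀ᵗ g` with `g` non-decreasing, positive on `(0, ∞)`, `g(0⁺) = 0` and `g(∞) = ∞` is an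
N-function: monotonicity of `g` gives convexity and the bounds `(t/2) g(t/2) ≤ ∫₀ᵗ g ≤ t g(t)`,
which transfer the limits of `g` to `t⁻¹ ∫₀ᵗ g`. The density `φ'(a + s) · s / (a + s)` of `φ_a`
has these properties because `s / (a + s)` is non-decreasing with limit `1` at infinity. At `0⁺` it
vanishes thanks to the factor `s` when `a > 0`, and thanks to `φ'(0⁺) = 0` when `a = 0`; the latter
is forced by `φ(t)/t → 0` through the same bound `t φ'(t) ≤ φ(2t)`.
-/

open Filter Set Topology MeasureTheory intervalIntegral

/-- An N-function: a convex function `φ : ℝ_{≥0} → ℝ_{≥0}` with `φ(0) = 0`,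
`φ(t) > 0` for `t > 0`, `φ(t)/t → 0` as `t → 0⁺` and `φ(t)/t → ∞` as `t → ∞`. -/
def IsNFunction (φ : ℝ → ℝ) : Prop :=
  ConvexOn ℝ (Set.Ici 0) φ ∧ (∀ t ≥ (0:ℝ), 0 ≤ φ t) ∧ φ 0 = 0 ∧
  (∀ t > (0:ℝ), 0 < φ t) ∧
  Filter.Tendsto (fun t => φ t / t) (nhdsWithin 0 (Set.Ioi 0)) (nhds 0) ∧
  Filter.Tendsto (fun t => φ t / t) Filter.atTop Filter.atTop

namespace MonotoneOn

variable {g : ℝ → ℝ}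

theorem sub_mul_le_integral {x y : ℝ} (hg : MonotoneOn g (Icc x y)) (hxy : x ≤ y) :
    (y - x) * g x ≤ ∫ s in x..y, g s := by
  have hint : IntervalIntegrable g volume x y := (uIcc_of_le hxy ▸ hg).intervalIntegrable
  simpa using integral_mono_on hxy intervalIntegrable_const hint
    fun s hs => hg (left_mem_Icc.2 hxy) hs hs.1

theorem integral_le_sub_mul {x y : ℝ} (hg : MonotoneOn g (Icc x y)) (hxy : x ≤ y) :
    ∫ s in x..y, g s ≤ (y - x) * g y := by
  have hint : IntervalIntegrable g volume x y := (uIcc_of_le hxy ▸ hg).intervalIntegrable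
  simpa using integral_mono_on hxy hint intervalIntegrable_const
    fun s hs => hg hs (right_mem_Icc.2 hxy) hs.2

theorem intervalIntegrable_of_Ici {c x y : ℝ} (hg : MonotoneOn g (Ici c)) (hx : c ≤ x)
    (hy : c ≤ y) : IntervalIntegrable g volume x y :=
  (hg.mono fun _ hs => le_trans (le_min hx hy) hs.1).intervalIntegrable

theorem convexOn_integral {c : ℝ} (hg : MonotoneOn g (Ici c)) :
    ConvexOn ℝ (Ici c) fun t => ∫ s in c..t, g s := by
  have hIcc {x y : ℝ} (hx : c ≤ x) : MonotoneOn g (Icc x y) :=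
    hg.mono fun s hs => hx.trans hs.1
  refine convexOn_of_slope_mono_adjacent (convex_Ici c) fun {x y z} (hx : c ≤ x) _ hxy hyz => ?_
  have hy : c ≤ y := hx.trans hxy.le
  rw [integral_interval_sub_left (hg.intervalIntegrable_of_Ici le_rfl hy)
      (hg.intervalIntegrable_of_Ici le_rfl hx),
    integral_interval_sub_left (hg.intervalIntegrable_of_Ici le_rfl (hy.trans hyz.le))
      (hg.intervalIntegrable_of_Ici le_rfl hy)]
  calc (∫ s in x..y, g s) / (y - x) ≤ g y := by
        rw [div_le_iff₀ (sub_pos.2 hxy), mul_comm]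
        exact (hIcc hx).integral_le_sub_mul hxy.le
    _ ≤ (∫ s in y..z, g s) / (z - y) := by
        rw [le_div_iff₀ (sub_pos.2 hyz), mul_comm]
        exact (hIcc hy).sub_mul_le_integral hyz.le

theorem intervalIntegral_nonneg (hg : MonotoneOn g (Ici 0)) (hg0 : 0 ≤ g 0) {t : ℝ} (ht : 0 ≤ t) :
    0 ≤ ∫ s in 0..t, g s :=
  integral_nonneg ht fun _ hs => hg0.trans (hg self_mem_Ici hs.1 hs.1)

theorem half_mul_le_integral (hg : MonotoneOn g (Ici 0)) (hg0 : 0 ≤ g 0) {t : ℝ} (ht : 0 ≤ t) :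
    t / 2 * g (t / 2) ≤ ∫ s in 0..t, g s := by
  have ht2 : 0 ≤ t / 2 := by linarith
  have hsplit := integral_add_adjacent_intervals (hg.intervalIntegrable_of_Ici le_rfl ht2)
    (hg.intervalIntegrable_of_Ici ht2 ht)
  have hfirst := hg.intervalIntegral_nonneg hg0 ht2
  have hsecond := (hg.mono fun _ hs => ht2.trans hs.1).sub_mul_le_integral (by linarith : t / 2 ≤ t)
  linarith

theorem tendsto_nhdsGT_zero_of_integral_div (hg : MonotoneOn g (Ici 0)) (hg0 : 0 ≤ g 0)
    (h : Tendsto (fun t => (∫ s in 0..t, g s) / t) (𝓝[>] 0) (𝓝 0)) :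
    Tendsto g (𝓝[>] 0) (𝓝 0) := by
  have h2 : Tendsto (2 * ·) (𝓝[>] (0 : ℝ)) (𝓝[>] 0) :=
    tendsto_comap.mono_left (comap_mulLeft_nhdsGT_zero two_pos).ge
  refine squeeze_zero' ?_ ?_ (by simpa using (h.comp h2).const_mul 2)
  · filter_upwards [self_mem_nhdsWithin] with t (ht : 0 < t)
    exact hg0.trans (hg self_mem_Ici ht.le ht.le)
  · filter_upwards [self_mem_nhdsWithin] with t (ht : 0 < t)
    have := hg.half_mul_le_integral hg0 (by linarith : 0 ≤ 2 * t)
    rw [mul_div_cancel_left₀ _ two_ne_zero] at this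
    rw [mul_div_assoc', le_div_iff₀ (by linarith)]
    linarith

end MonotoneOn

theorem isNFunction_integral {g : ℝ → ℝ} (hg : MonotoneOn g (Ici 0)) (hg0 : 0 ≤ g 0)
    (hpos : ∀ t > 0, 0 < g t) (hzero : Tendsto g (𝓝[>] 0) (𝓝 0))
    (htop : Tendsto g atTop atTop) :
    IsNFunction fun t => ∫ s in 0..t, g s := by
  refine ⟨hg.convexOn_integral, fun t => hg.intervalIntegral_nonneg hg0, by simp,
    fun t ht => ?_, ?_, ?_⟩
  · exact (mul_pos (half_pos ht) (hpos _ (half_pos ht))).trans_le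
      (hg.half_mul_le_integral hg0 ht.le)
  · refine squeeze_zero' ?_ ?_ hzero <;> filter_upwards [self_mem_nhdsWithin] with t (ht : 0 < t)
    · exact div_nonneg (hg.intervalIntegral_nonneg hg0 ht.le) ht.le
    · rw [div_le_iff₀ ht, mul_comm]
      simpa using (hg.mono fun s hs => hs.1).integral_le_sub_mul ht.le
  · refine tendsto_atTop_mono' atTop ?_
      ((htop.comp (tendsto_id.atTop_div_const two_pos)).atTop_div_const two_pos)
    filter_upwards [eventually_gt_atTop 0] with t ht
    rw [Function.comp_apply, id, le_div_iff₀ ht]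
    linarith [hg.half_mul_le_integral hg0 ht.le]

/-- The derivative `φ_a'(s) = φ'(a + s) · s / (a + s)` of the shifted function `φ_a`. -/
noncomputable def shiftedDeriv (g : ℝ → ℝ) (a s : ℝ) : ℝ := g (a + s) * s / (a + s)

section shiftedDeriv

variable {g : ℝ → ℝ} {a : ℝ}

@[simp] theorem shiftedDeriv_zero : shiftedDeriv g a 0 = 0 := by simp [shiftedDeriv]

theorem shiftedDeriv_pos (hpos : ∀ t > 0, 0 < g t) (ha : 0 ≤ a) {t : ℝ} (ht : 0 < t) :
    0 < shiftedDeriv g a t :=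
  div_pos (mul_pos (hpos _ (by linarith)) ht) (by linarith)

theorem monotoneOn_shiftedDeriv (hg : MonotoneOn g (Ici 0)) (hg0 : 0 ≤ g 0) (ha : 0 ≤ a) :
    MonotoneOn (shiftedDeriv g a) (Ici 0) := by
  have hshift : MonotoneOn (fun s => g (a + s)) (Ici 0) := fun s hs t ht hst =>
    hg (add_nonneg ha hs) (add_nonneg ha ht) (add_le_add_right hst a)
  -- for `a = 0` the ratio jumps from `0 / 0 = 0` at `s = 0` to `1` on `(0, ∞)`
  have hratio : MonotoneOn (fun s => s / (a + s)) (Ici 0) := by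
    intro s (hs : 0 ≤ s) t (ht : 0 ≤ t) hst
    rcases (add_nonneg ha hs).eq_or_lt with h | h
    · simp only [← h, div_zero]
      positivity
    · rw [div_le_div_iff₀ h (by linarith)]
      nlinarith
  have := hshift.mul hratio
    (fun s hs => hg0.trans (hg self_mem_Ici (add_nonneg ha hs) (add_nonneg ha hs)))
    fun s (hs : 0 ≤ s) => div_nonneg hs (add_nonneg ha hs)
  intro s hs t ht hst
  simpa only [shiftedDeriv, mul_div_assoc, Pi.mul_apply] using this hs ht hst

theorem tendsto_shiftedDeriv_atTop (hg : Tendsto g atTop atTop) :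
    Tendsto (shiftedDeriv g a) atTop atTop := by
  have hshift := hg.comp (tendsto_atTop_add_const_left _ a tendsto_id)
  refine tendsto_atTop_mono' atTop ?_ (hshift.atTop_div_const two_pos)
  filter_upwards [eventually_gt_atTop |a|, hshift.eventually_ge_atTop 0] with t ht hnn
  have hat : 0 < a + t := by linarith [neg_abs_le a]
  rw [Function.comp_apply, id] at hnn ⊢
  rw [shiftedDeriv, le_div_iff₀ hat]
  nlinarith [mul_nonneg hnn (by linarith [le_abs_self a] : 0 ≤ t - a)]

theorem tendsto_shiftedDeriv_nhdsGT_zero (hg : MonotoneOn g (Ici 0)) (hg0 : 0 ≤ g 0)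
    (hzero : Tendsto g (𝓝[>] 0) (𝓝 0)) (ha : 0 ≤ a) :
    Tendsto (shiftedDeriv g a) (𝓝[>] 0) (𝓝 0) := by
  rcases ha.eq_or_lt with rfl | ha
  · refine hzero.congr' ?_
    filter_upwards [self_mem_nhdsWithin] with t (ht : 0 < t)
    simp [shiftedDeriv, ht.ne']
  · refine squeeze_zero' (g := fun t => g (a + 1) * t / a) ?_ ?_ ?_
    · filter_upwards [self_mem_nhdsWithin] with t (ht : 0 < t)
      simpa using monotoneOn_shiftedDeriv hg hg0 ha.le self_mem_Ici ht.le ht.le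
    · filter_upwards [Ioo_mem_nhdsGT one_pos] with t ⟨ht0, ht1⟩
      have hg1 : 0 ≤ g (a + 1) := hg0.trans (hg self_mem_Ici (by simp; linarith) (by linarith))
      calc shiftedDeriv g a t = g (a + t) * (t / (a + t)) := mul_div_assoc ..
        _ ≤ g (a + 1) * (t / a) :=
          mul_le_mul (hg (by simp; linarith) (by simp; linarith) (by linarith))
            (div_le_div_of_nonneg_left ht0.le ha (by linarith)) (by positivity) hg1
        _ = g (a + 1) * t / a := (mul_div_assoc ..).symm
    · simpa using ((continuous_const.mul continuous_id).div_const a).tendsto' 0 0 (by simp)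
        |>.mono_left nhdsWithin_le_nhds

end shiftedDeriv

/-- For an N-function `φ` with right-derivative `φ'` and `a ≥ 0`, the shifted
function `φ_a(t) = ∫₀^t φ'(a+s)·s/(a+s) ds` is again an N-function. -/
theorem shifted_N_function_is_N_function
    (φ φ' : ℝ → ℝ)
    (hN : IsNFunction φ)
    (hφ : ∀ t ≥ (0:ℝ), φ t = ∫ s in (0:ℝ)..t, φ' s)
    (hmono : MonotoneOn φ' (Set.Ici 0))
    (h0 : φ' 0 = 0) (hpos : ∀ t > (0:ℝ), 0 < φ' t)
    (htop : Filter.Tendsto φ' Filter.atTop Filter.atTop)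
    (a : ℝ) (ha : 0 ≤ a) :
    IsNFunction (fun t => ∫ s in (0:ℝ)..t, φ' (a + s) * s / (a + s)) := by
  obtain ⟨-, -, -, -, hφzero, -⟩ := hN
  have hφ'_zero : Tendsto φ' (𝓝[>] 0) (𝓝 0) := by
    refine hmono.tendsto_nhdsGT_zero_of_integral_div h0.ge (hφzero.congr' ?_)
    filter_upwards [self_mem_nhdsWithin] with t (ht : 0 < t)
    rw [hφ t ht.le]
  exact isNFunction_integral (monotoneOn_shiftedDeriv hmono h0.ge ha) shiftedDeriv_zero.ge
    (fun _ => shiftedDeriv_pos hpos ha) (tendsto_shiftedDeriv_nhdsGT_zero hmono h0.ge hφ'_zero ha)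
    (tendsto_shiftedDeriv_atTop htop)
end

section
/- Let φ : ℝ_{≥0} → ℝ_{≥0} be an N-function. Then for every ε ∈ (0, 1] there exists a constant c_ε > 0 (one may take c_ε depending on the Δ₂-constant of φ* and ε) such that the ε-Young inequality s·t ≤ c_ε φ*(s) + ε φ(t) holds for all s, t ≥ 0, provided φ* satisfies the Δ₂-condition. -/
/-!
Young's inequality `s t ≤ φ*(s) + φ(t)` applied to `s / ε` gives `s t ≤ ε φ*(s / ε) + ε φ(t)`.
Since `φ*` is nonnegative and nondecreasing, iterating the Δ₂-condition bounds `φ*(s / ε)` by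
`K φ*(s)` with `K = (max C 1)ⁿ` as soon as `1 / ε ≤ 2ⁿ`, so `c_ε = ε K` works.
-/

open Set

section FenchelConjugate

variable {φ : ℝ → ℝ} {s a : ℝ}

theorem mul_le_add_of_isLUB_conjugate (h : IsLUB ((fun t => s * t - φ t) '' Ici 0) a)
    {t : ℝ} (ht : 0 ≤ t) : s * t ≤ a + φ t := by
  have := h.1 ⟨t, ht, rfl⟩
  simp only at this
  linarith

theorem nonneg_of_isLUB_conjugate (hφ0 : φ 0 = 0)
    (h : IsLUB ((fun t => s * t - φ t) '' Ici 0) a) : 0 ≤ a := by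
  simpa [hφ0] using h.1 ⟨0, self_mem_Ici, rfl⟩

theorem monotoneOn_of_isLUB_conjugate {φstar : ℝ → ℝ}
    (h : ∀ s ≥ (0:ℝ), IsLUB ((fun t => s * t - φ t) '' Ici 0) (φstar s)) :
    MonotoneOn φstar (Ici 0) := by
  intro s hs s' hs' hss'
  refine (h s hs).2 ?_
  rintro _ ⟨t, ht, rfl⟩
  have hyoung := mul_le_add_of_isLUB_conjugate (h s' hs') ht
  have hst := mul_le_mul_of_nonneg_right hss' ht
  simp only
  linarith

end FenchelConjugate

section DeltaTwo

variable {f : ℝ → ℝ} {K : ℝ}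

theorem le_two_pow_mul_of_le_two_mul (hK : 0 ≤ K) (hf : ∀ s ≥ (0:ℝ), f (2 * s) ≤ K * f s)
    (n : ℕ) {s : ℝ} (hs : 0 ≤ s) : f (2 ^ n * s) ≤ K ^ n * f s := by
  induction n with
  | zero => simp
  | succ n ih =>
    calc f (2 ^ (n + 1) * s) = f (2 * (2 ^ n * s)) := by ring_nf
      _ ≤ K * f (2 ^ n * s) := hf _ (by positivity)
      _ ≤ K * (K ^ n * f s) := mul_le_mul_of_nonneg_left ih hK
      _ = K ^ (n + 1) * f s := by ring

theorem exists_pos_le_mul_of_delta2 (hf0 : ∀ s ≥ (0:ℝ), 0 ≤ f s) (hmono : MonotoneOn f (Ici 0))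
    (hΔ : ∀ s ≥ (0:ℝ), f (2 * s) ≤ K * f s) {r : ℝ} (hr : 0 ≤ r) :
    ∃ M > (0:ℝ), ∀ s ≥ (0:ℝ), f (r * s) ≤ M * f s := by
  have hΔ' : ∀ s ≥ (0:ℝ), f (2 * s) ≤ max K 1 * f s := fun s hs =>
    (hΔ s hs).trans (mul_le_mul_of_nonneg_right (le_max_left K 1) (hf0 s hs))
  obtain ⟨n, hn⟩ := pow_unbounded_of_one_lt r (one_lt_two (α := ℝ))
  refine ⟨max K 1 ^ n, by positivity, fun s hs => ?_⟩
  calc f (r * s) ≤ f (2 ^ n * s) :=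
        hmono (mul_nonneg hr hs) (show (0:ℝ) ≤ 2 ^ n * s by positivity)
          (mul_le_mul_of_nonneg_right hn.le hs)
    _ ≤ max K 1 ^ n * f s := le_two_pow_mul_of_le_two_mul (by positivity) hΔ' n hs

end DeltaTwo

/-- **ε-Young inequality.** If `φ` is an N-function whose conjugate `φ*`
satisfies the Δ₂-condition, then for every `ε ∈ (0, 1]` there is `c_ε > 0`
with `s·t ≤ c_ε φ*(s) + ε φ(t)` for all `s, t ≥ 0`. -/
theorem eps_young_inequality
    (φ φstar : ℝ → ℝ) (hN : IsNFunction φ)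
    (hφstar : ∀ s ≥ (0:ℝ), IsLUB ((fun t => s * t - φ t) '' Set.Ici 0) (φstar s))
    (C : ℝ) (hΔ : ∀ s ≥ (0:ℝ), φstar (2 * s) ≤ C * φstar s) :
    ∀ ε ∈ Set.Ioc (0:ℝ) 1, ∃ c > (0:ℝ), ∀ s ≥ (0:ℝ), ∀ t ≥ (0:ℝ),
      s * t ≤ c * φstar s + ε * φ t := by
  rintro ε ⟨hε0, -⟩
  obtain ⟨-, -, hφ0, -⟩ := hN
  have hstar0 : ∀ s ≥ (0:ℝ), 0 ≤ φstar s := fun s hs =>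
    nonneg_of_isLUB_conjugate hφ0 (hφstar s hs)
  obtain ⟨K, hK, hKbound⟩ := exists_pos_le_mul_of_delta2 hstar0
    (monotoneOn_of_isLUB_conjugate hφstar) hΔ (inv_nonneg.mpr hε0.le)
  refine ⟨ε * K, by positivity, fun s hs t ht => ?_⟩
  have hsε : 0 ≤ ε⁻¹ * s := by positivity
  calc s * t = ε * (ε⁻¹ * s * t) := by field_simp
    _ ≤ ε * (φstar (ε⁻¹ * s) + φ t) :=
        mul_le_mul_of_nonneg_left (mul_le_add_of_isLUB_conjugate (hφstar _ hsε) ht) hε0.le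
    _ ≤ ε * (K * φstar s + φ t) := by gcongr; exact hKbound s hs
    _ = ε * K * φstar s + ε * φ t := by ring
end
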